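/- For every symmetric 2×2 complex matrix τ whose imaginary part is positive definite, writing θ₁ = θ_{(0,0),(0,0)}(τ), θ₂ = θ_{(0,0),(1,1)}(τ), θ₃ = θ_{(0,0),(1,0)}(τ), θ₄ = θ_{(0,0),(0,1)}(τ), and g = θ_{(0,1),(0,0)}(τ), the identity g⁸ − (θ₁⁴ − θ₂⁴ + θ₃⁴ − θ₄⁴)·g⁴ + (θ₁²θ₃² − θ₂²θ₄²)² = 0 holds. -/

import Mathlib

open scoped Real
open Complex

/-- The theta constant `θ_{x,y}(τ)` for `τ` in the Siegel upper half plane. -/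
noncomputable def thetaConstant (τ : Matrix (Fin 2) (Fin 2) ℂ) (x y : Fin 2 → ℤ) : ℂ :=
  ∑' n : Fin 2 → ℤ,
    Complex.exp ((π : ℂ) * Complex.I *
      ((∑ i, ∑ j, ((n i : ℂ) + (x i : ℂ) / 2) * τ i j * ((n j : ℂ) + (x j : ℂ) / 2))
        + ∑ i, ((n i : ℂ) + (x i : ℂ) / 2) * (y i : ℂ)))

/-!
By the duplication formula
`θ[a, y](τ) θ[a, y'](τ) = ∑_{e ∈ {0,1}²} θ[e + a, y + y'](2τ) θ[e, y - y'](2τ)`,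
the squares `θ₁², θ₂², θ₃², θ₄²` are the signed sums `a² ± b² ± c² ± d²` of the squares of the
theta-nulls `a, b, c, d = θ[e, 0](2τ)`, and `g² = 2(ab + cd)`; the relation is then a polynomial
identity in `a, b, c, d`. The duplication formula comes from the change of summation variables
`(m, n) = (k + l + e, k - l)` in the product of two absolutely convergent series, together with
the parallelogram law for the quadratic form of `τ`.
-/

open scoped Matrix

theorem Matrix.PosDef.exists_pos_mul_norm_sq_le {ι : Type*} [Fintype ι] {Y : Matrix ι ι ℝ}
    (hY : Y.PosDef) : ∃ c > 0, ∀ v : ι → ℝ, c * ‖v‖ ^ 2 ≤ v ⬝ᵥ Y *ᵥ v := by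
  have hscale (s : ℝ) (v : ι → ℝ) : (s • v) ⬝ᵥ Y *ᵥ (s • v) = s ^ 2 * (v ⬝ᵥ Y *ᵥ v) := by
    rw [Matrix.mulVec_smul, dotProduct_smul, smul_dotProduct, smul_eq_mul, smul_eq_mul]; ring
  have hunit {v : ι → ℝ} (hv : v ≠ 0) : ‖v‖⁻¹ • v ∈ Metric.sphere (0 : ι → ℝ) 1 := by
    simp [norm_smul, hv]
  rcases (Metric.sphere (0 : ι → ℝ) 1).eq_empty_or_nonempty with hempty | hne
  · refine ⟨1, one_pos, fun v => ?_⟩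
    obtain rfl : v = 0 := by_contra fun hv => (hempty ▸ hunit hv : _ ∈ (∅ : Set _))
    simp
  have hcont : Continuous fun v : ι → ℝ => v ⬝ᵥ Y *ᵥ v := by fun_prop
  obtain ⟨u, hu, hmin⟩ := (isCompact_sphere _ _).exists_isMinOn hne hcont.continuousOn
  have hu0 : u ≠ 0 := ne_zero_of_mem_unit_sphere ⟨u, hu⟩
  refine ⟨u ⬝ᵥ Y *ᵥ u, by simpa using hY.dotProduct_mulVec_pos hu0, fun v => ?_⟩
  rcases eq_or_ne v 0 with rfl | hv
  · simp
  have hle : u ⬝ᵥ Y *ᵥ u ≤ ‖v‖⁻¹ ^ 2 * (v ⬝ᵥ Y *ᵥ v) := (hmin (hunit hv)).trans_eq (hscale _ _)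
  have hpos : 0 < ‖v‖ := norm_pos_iff.mpr hv
  calc (u ⬝ᵥ Y *ᵥ u) * ‖v‖ ^ 2 ≤ ‖v‖⁻¹ ^ 2 * (v ⬝ᵥ Y *ᵥ v) * ‖v‖ ^ 2 := by gcongr
    _ = v ⬝ᵥ Y *ᵥ v := by field_simp

theorem Real.summable_exp_neg_mul_add_sq {c : ℝ} (hc : 0 < c) (α : ℝ) :
    Summable fun n : ℤ => Real.exp (-π * c * (n + α) ^ 2) := by
  have h := ((summable_jacobiTheta₂_term_iff (c * α * I) (c * I)).mpr (by simpa using hc)).norm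
  refine (h.mul_left (Real.exp (-π * c * α ^ 2))).congr fun n => ?_
  rw [norm_jacobiTheta₂_term, ← Real.exp_add]
  congr 1
  simp only [mul_re, mul_im, ofReal_re, ofReal_im, I_re, I_im]
  ring

noncomputable def thetaTerm (τ : Matrix (Fin 2) (Fin 2) ℂ) (x y : Fin 2 → ℤ)
    (n : Fin 2 → ℤ) : ℂ :=
  Complex.exp ((π : ℂ) * Complex.I *
      ((∑ i, ∑ j, ((n i : ℂ) + (x i : ℂ) / 2) * τ i j * ((n j : ℂ) + (x j : ℂ) / 2))
        + ∑ i, ((n i : ℂ) + (x i : ℂ) / 2) * (y i : ℂ)))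

theorem thetaConstant_eq_tsum_thetaTerm (τ : Matrix (Fin 2) (Fin 2) ℂ) (x y : Fin 2 → ℤ) :
    thetaConstant τ x y = ∑' n, thetaTerm τ x y n := rfl

theorem norm_thetaTerm (τ : Matrix (Fin 2) (Fin 2) ℂ) (x y n : Fin 2 → ℤ) :
    ‖thetaTerm τ x y n‖ =
      Real.exp (-π * ((fun i => n i + x i / 2 : Fin 2 → ℝ) ⬝ᵥ
        τ.map im *ᵥ (fun i => n i + x i / 2 : Fin 2 → ℝ))) := by
  rw [thetaTerm, Complex.norm_exp]
  congr 1
  simp only [dotProduct, Matrix.mulVec, Matrix.map_apply, Fin.sum_univ_two, mul_re, mul_im,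
    add_re, add_im, div_re, div_im, ofReal_re, ofReal_im, I_re, I_im, intCast_re, intCast_im]
  norm_num
  ring

theorem summable_norm_thetaTerm {τ : Matrix (Fin 2) (Fin 2) ℂ} (hτ : (τ.map im).PosDef)
    (x y : Fin 2 → ℤ) : Summable fun n => ‖thetaTerm τ x y n‖ := by
  obtain ⟨c, hc, hbound⟩ := hτ.exists_pos_mul_norm_sq_le
  have hgauss (i : Fin 2) := Real.summable_exp_neg_mul_add_sq (half_pos hc) (x i / 2)
  have hprod := ((hgauss 0).mul_of_nonneg (hgauss 1) (fun _ => (Real.exp_pos _).le)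
    (fun _ => (Real.exp_pos _).le))
  refine ((piFinTwoEquiv fun _ => ℤ).summable_iff.mpr hprod).of_nonneg_of_le
    (fun _ => norm_nonneg _) fun n => ?_
  rw [Function.comp_apply, piFinTwoEquiv_apply, norm_thetaTerm, ← Real.exp_add, Real.exp_le_exp]
  set v : Fin 2 → ℝ := fun i => n i + x i / 2
  have hcoord (i : Fin 2) : v i ^ 2 ≤ ‖v‖ ^ 2 := by
    simpa [sq_abs] using pow_le_pow_left₀ (abs_nonneg _) (norm_le_pi_norm v i) 2
  have hQ : c / 2 * (v 0 ^ 2 + v 1 ^ 2) ≤ v ⬝ᵥ τ.map im *ᵥ v := by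
    nlinarith [hbound v, hcoord 0, hcoord 1]
  show -π * (v ⬝ᵥ τ.map im *ᵥ v) ≤ -π * (c / 2) * v 0 ^ 2 + -π * (c / 2) * v 1 ^ 2
  nlinarith [mul_le_mul_of_nonneg_left hQ Real.pi_pos.le]

def charOfBits (e : Bool × Bool) : Fin 2 → ℤ := ![e.1.toNat, e.2.toNat]

def duplicationEquiv :
    (Bool × Bool) × (Fin 2 → ℤ) × (Fin 2 → ℤ) ≃ (Fin 2 → ℤ) × (Fin 2 → ℤ) where
  toFun p := (p.2.1 + p.2.2 + charOfBits p.1, p.2.1 - p.2.2)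
  invFun q := ((decide ((q.1 0 + q.2 0) % 2 = 1), decide ((q.1 1 + q.2 1) % 2 = 1)),
    fun i => (q.1 i + q.2 i) / 2, fun i => (q.1 i + q.2 i) / 2 - q.2 i)
  left_inv := by
    rintro ⟨⟨b₀, b₁⟩, k, l⟩
    ext i <;> try fin_cases i
    all_goals cases b₀ <;> cases b₁ <;> simp [charOfBits] <;> omega
  right_inv := by
    rintro ⟨m, n⟩
    ext i <;> fin_cases i <;>
      rcases Int.emod_two_eq_zero_or_one (m 0 + n 0) with h₀ | h₀ <;>
      rcases Int.emod_two_eq_zero_or_one (m 1 + n 1) with h₁ | h₁ <;>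
      simp [charOfBits, h₀, h₁] <;> omega

-- With `u = k + (e + a) / 2` and `w = l + e / 2` the two summation points are `u + w` and `u - w`,
-- and the parallelogram law for the quadratic form of `τ` splits the exponent.
theorem thetaTerm_mul_thetaTerm_add_sub (τ : Matrix (Fin 2) (Fin 2) ℂ) (a y y' : Fin 2 → ℤ)
    (e : Bool × Bool) (k l : Fin 2 → ℤ) :
    thetaTerm τ a y (k + l + charOfBits e) * thetaTerm τ a y' (k - l) =
      thetaTerm ((2 : ℂ) • τ) (charOfBits e + a) (y + y') k *
        thetaTerm ((2 : ℂ) • τ) (charOfBits e) (y - y') l := by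
  simp only [thetaTerm, ← Complex.exp_add]
  congr 1
  simp only [Fin.sum_univ_two, Matrix.smul_apply, smul_eq_mul, Pi.add_apply, Pi.sub_apply]
  push_cast
  ring

theorem posDef_map_im_two_smul {τ : Matrix (Fin 2) (Fin 2) ℂ} (hτ : (τ.map im).PosDef) :
    (((2 : ℂ) • τ).map im).PosDef := by
  have h : ((2 : ℂ) • τ).map im = (2 : ℝ) • τ.map im := by ext; simp
  exact h ▸ hτ.smul two_pos

theorem thetaConstant_mul_thetaConstant {τ : Matrix (Fin 2) (Fin 2) ℂ} (hτ : (τ.map im).PosDef)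
    (a y y' : Fin 2 → ℤ) :
    thetaConstant τ a y * thetaConstant τ a y' =
      ∑ e, thetaConstant ((2 : ℂ) • τ) (charOfBits e + a) (y + y') *
        thetaConstant ((2 : ℂ) • τ) (charOfBits e) (y - y') := by
  have hf := summable_norm_thetaTerm hτ a y
  have hg := summable_norm_thetaTerm hτ a y'
  have hprod : Summable fun p =>
      thetaTerm τ a y (duplicationEquiv p).1 * thetaTerm τ a y' (duplicationEquiv p).2 :=
    duplicationEquiv.summable_iff.mpr (summable_mul_of_summable_norm hf hg)
  simp only [thetaConstant_eq_tsum_thetaTerm]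
  rw [tsum_mul_tsum_of_summable_norm hf hg, ← duplicationEquiv.tsum_eq,
    hprod.tsum_prod' hprod.prod_factor, tsum_fintype]
  refine Finset.sum_congr rfl fun e _ => ?_
  have h2τ := posDef_map_im_two_smul hτ
  rw [tsum_mul_tsum_of_summable_norm (summable_norm_thetaTerm h2τ _ _)
    (summable_norm_thetaTerm h2τ _ _)]
  exact tsum_congr fun kl => thetaTerm_mul_thetaTerm_add_sub τ a y y' e kl.1 kl.2

theorem thetaConstant_add_two_smul_left (σ : Matrix (Fin 2) (Fin 2) ℂ) (x m y : Fin 2 → ℤ) :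
    thetaConstant σ (x + 2 • m) y = thetaConstant σ x y := by
  simp only [thetaConstant_eq_tsum_thetaTerm]
  conv_rhs => rw [← (Equiv.addRight m).tsum_eq]
  refine tsum_congr fun n => ?_
  simp only [thetaTerm, Equiv.coe_addRight, Pi.add_apply, two_nsmul, Fin.sum_univ_two]
  congr 1
  push_cast
  ring

theorem thetaConstant_add_two_smul_right (σ : Matrix (Fin 2) (Fin 2) ℂ) (x y m : Fin 2 → ℤ) :
    thetaConstant σ x (y + 2 • m) = (-1) ^ (x ⬝ᵥ m) * thetaConstant σ x y := by
  simp only [thetaConstant_eq_tsum_thetaTerm, ← tsum_mul_left]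
  refine tsum_congr fun n => ?_
  have hsign : (-1 : ℂ) ^ (x ⬝ᵥ m) = Complex.exp ((x ⬝ᵥ m : ℤ) * (π * I)) := by
    rw [Complex.exp_int_mul, Complex.exp_pi_mul_I]
  rw [hsign, thetaTerm, thetaTerm, ← Complex.exp_add,
    ← mul_one (Complex.exp ((x ⬝ᵥ m : ℤ) * (π * I) + _)),
    ← Complex.exp_int_mul_two_pi_mul_I (n ⬝ᵥ m), ← Complex.exp_add]
  congr 1
  simp only [dotProduct, Fin.sum_univ_two, Pi.add_apply, two_nsmul]
  push_cast
  ring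

theorem thetaConstant_sq {τ : Matrix (Fin 2) (Fin 2) ℂ} (hτ : (τ.map im).PosDef)
    (a y : Fin 2 → ℤ) :
    thetaConstant τ a y ^ 2 =
      ∑ e, (-1) ^ ((charOfBits e + a) ⬝ᵥ y) *
        (thetaConstant ((2 : ℂ) • τ) (charOfBits e + a) 0 *
          thetaConstant ((2 : ℂ) • τ) (charOfBits e) 0) := by
  rw [sq, thetaConstant_mul_thetaConstant hτ, sub_self, ← two_nsmul, ← zero_add (2 • y)]
  simp only [thetaConstant_add_two_smul_right, mul_assoc]

theorem pMinus_eq_zero_of_sq_eq {R : Type*} [CommRing R] {t₁ t₂ t₃ t₄ g a b c d : R}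
    (h₁ : t₁ ^ 2 = a ^ 2 + b ^ 2 + c ^ 2 + d ^ 2) (h₂ : t₂ ^ 2 = a ^ 2 - b ^ 2 - c ^ 2 + d ^ 2)
    (h₃ : t₃ ^ 2 = a ^ 2 + b ^ 2 - c ^ 2 - d ^ 2) (h₄ : t₄ ^ 2 = a ^ 2 - b ^ 2 + c ^ 2 - d ^ 2)
    (hg : g ^ 2 = 2 * (a * b + c * d)) :
    g ^ 8 - (t₁ ^ 4 - t₂ ^ 4 + t₃ ^ 4 - t₄ ^ 4) * g ^ 4
      + (t₁ ^ 2 * t₃ ^ 2 - t₂ ^ 2 * t₄ ^ 2) ^ 2 = 0 := by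
  calc _ = (g ^ 2) ^ 4 - ((t₁ ^ 2) ^ 2 - (t₂ ^ 2) ^ 2 + (t₃ ^ 2) ^ 2 - (t₄ ^ 2) ^ 2) * (g ^ 2) ^ 2
        + (t₁ ^ 2 * t₃ ^ 2 - t₂ ^ 2 * t₄ ^ 2) ^ 2 := by ring
    _ = 0 := by rw [h₁, h₂, h₃, h₄, hg]; ring

theorem theta_g_fourth_power_satisfies_Pminus_general
    (τ : Matrix (Fin 2) (Fin 2) ℂ)
    (hpos : (τ.map Complex.im).PosDef) :
    let θ₁ := thetaConstant τ ![0, 0] ![0, 0]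
    let θ₂ := thetaConstant τ ![0, 0] ![1, 1]
    let θ₃ := thetaConstant τ ![0, 0] ![1, 0]
    let θ₄ := thetaConstant τ ![0, 0] ![0, 1]
    let g := thetaConstant τ ![0, 1] ![0, 0]
    g ^ 8 - (θ₁ ^ 4 - θ₂ ^ 4 + θ₃ ^ 4 - θ₄ ^ 4) * g ^ 4
      + (θ₁ ^ 2 * θ₃ ^ 2 - θ₂ ^ 2 * θ₄ ^ 2) ^ 2 = 0 := by
  intro θ₁ θ₂ θ₃ θ₄ g
  have hreduce (x₀ : ℤ) :
      thetaConstant ((2 : ℂ) • τ) ![x₀, 2] 0 = thetaConstant ((2 : ℂ) • τ) ![x₀, 0] 0 := by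
    simpa using thetaConstant_add_two_smul_left ((2 : ℂ) • τ) ![x₀, 0] ![0, 1] 0
  apply pMinus_eq_zero_of_sq_eq
    (a := thetaConstant ((2 : ℂ) • τ) ![0, 0] 0) (b := thetaConstant ((2 : ℂ) • τ) ![0, 1] 0)
    (c := thetaConstant ((2 : ℂ) • τ) ![1, 0] 0) (d := thetaConstant ((2 : ℂ) • τ) ![1, 1] 0)
  all_goals
    norm_num [θ₁, θ₂, θ₃, θ₄, g, thetaConstant_sq hpos, Fintype.sum_prod_type, charOfBits, hreduce]
    ring

/-- from the proof of Theorem 4.2 of the paper. With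
`θ₁ = θ_{(0,0),(0,0)}`, `θ₂ = θ_{(0,0),(1,1)}`, `θ₃ = θ_{(0,0),(1,0)}`,
`θ₄ = θ_{(0,0),(0,1)}` and `g = θ_{(0,1),(0,0)}`, one has
`g⁸ − (θ₁⁴ − θ₂⁴ + θ₃⁴ − θ₄⁴)g⁴ + (θ₁²θ₃² − θ₂²θ₄²)² = 0` on the Siegel upper half
plane. -/
theorem theta_g_fourth_power_satisfies_Pminus
    (τ : Matrix (Fin 2) (Fin 2) ℂ)
    (hsymm : τ.IsSymm)
    (hpos : (τ.map Complex.im).PosDef) :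
    let θ₁ := thetaConstant τ ![0, 0] ![0, 0]
    let θ₂ := thetaConstant τ ![0, 0] ![1, 1]
    let θ₃ := thetaConstant τ ![0, 0] ![1, 0]
    let θ₄ := thetaConstant τ ![0, 0] ![0, 1]
    let g := thetaConstant τ ![0, 1] ![0, 0]
    g ^ 8 - (θ₁ ^ 4 - θ₂ ^ 4 + θ₃ ^ 4 - θ₄ ^ 4) * g ^ 4
      + (θ₁ ^ 2 * θ₃ ^ 2 - θ₂ ^ 2 * θ₄ ^ 2) ^ 2 = 0 :=
  theta_g_fourth_power_satisfies_Pminus_general τ hpos
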